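/- Let M be a tractable metric space. Then the magnitude map on nonempty compact subsets of M (with the Hausdorff metric) is uniformly continuous if and only if the magnitude map on nonempty finite subsets of M (with the Hausdorff metric) is uniformly continuous. -/

import Mathlib

open Metric TopologicalSpace Filter Topology Bornology
open scoped ENNReal NNReal Matrix

/-- The similarity matrix of a finite subset of a metric space. -/
noncomputable def simMatrix {X : Type*} [MetricSpace X] (s : Finset X) : Matrix s s ℝ :=
  fun i j => Real.exp (-dist (i : X) (j : X))

/-- A metric space is positive definite when every finite subspace has a positive
definite similarity matrix. -/
def IsPosDefSpace (X : Type*) [MetricSpace X] : Prop :=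
  ∀ s : Finset X, (simMatrix s).PosDef

/-- The magnitude of a finite subset of a metric space: the sum of the entries of the
inverse of its similarity matrix. -/
noncomputable def finMag {X : Type*} [MetricSpace X] (s : Finset X) : ℝ :=
  letI : DecidableEq X := Classical.decEq X
  ∑ i, ∑ j, (simMatrix s)⁻¹ i j

/-- The magnitude of a (compact) subset of a metric space, valued in `[0, ∞]`:
the supremum of the magnitudes of its finite subsets. -/
noncomputable def cMagE {X : Type*} [MetricSpace X] (K : Set X) : ℝ≥0∞ :=
  ⨆ (s : Finset X) (_ : (s : Set X) ⊆ K), ENNReal.ofReal (finMag s)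

/-- The real-valued magnitude of a (compact) subset of a metric space. -/
noncomputable def cMag {X : Type*} [MetricSpace X] (K : Set X) : ℝ :=
  (cMagE K).toReal

/-- A metric space is tractable when it is positive definite and all of its closed balls
are compact and of finite magnitude. -/
def Tractable (X : Type*) [MetricSpace X] : Prop :=
  IsPosDefSpace X ∧ (∀ (x : X) (r : ℝ), IsCompact (closedBall x r)) ∧
    ∀ (x : X) (r : ℝ), cMagE (closedBall x r) < ⊤

/-! For positive definite `A`, the sum of the entries of `A⁻¹` is the maximum over `v` of
`2 ∑ v - vᵀ A v`, attained at `v = A⁻¹ 1`. Extending the maximiser for a principal submatrix by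
zero shows that magnitude is monotone on finite sets, so the two notions of magnitude agree on
finite sets. If `d_H(K, K') < r`, each finite `s ⊆ K` moves to a finite `s' ⊆ K'` with `d_H(s, s') < r`, and then `mg s ≤ mg s' + η ≤ mg K' + η`: a modulus
of uniform continuity on finite sets serves on compact sets as well. -/

namespace Matrix

variable {m n : Type*} [Fintype m] [Fintype n] [DecidableEq m] [DecidableEq n]

omit [DecidableEq n] in
lemma sum_sum_eq_one_dotProduct_mulVec_one (B : Matrix n n ℝ) :
    ∑ i, ∑ j, B i j = 1 ⬝ᵥ (B *ᵥ 1) := by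
  simp [mulVec, dotProduct]

lemma PosDef.sum_inv_nonneg {A : Matrix n n ℝ} (hA : A.PosDef) : 0 ≤ ∑ i, ∑ j, A⁻¹ i j := by
  simpa [sum_sum_eq_one_dotProduct_mulVec_one] using
    hA.inv.posSemidef.dotProduct_mulVec_nonneg 1

lemma PosDef.two_mul_dotProduct_sub_le {A : Matrix n n ℝ} (hA : A.PosDef) (v w : n → ℝ) :
    2 * (v ⬝ᵥ w) - v ⬝ᵥ (A *ᵥ v) ≤ w ⬝ᵥ (A⁻¹ *ᵥ w) := by
  set u := A⁻¹ *ᵥ w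
  have hAu : A *ᵥ u = w := by
    rw [mulVec_mulVec, mul_nonsing_inv _ hA.det_pos.ne'.isUnit, one_mulVec]
  have hsymm : u ⬝ᵥ (A *ᵥ v) = v ⬝ᵥ (A *ᵥ u) := by
    rw [dotProduct_mulVec, ← mulVec_transpose, (isHermitian_iff_isSymm.1 hA.isHermitian).eq,
      dotProduct_comm]
  have hnonneg := hA.posSemidef.dotProduct_mulVec_nonneg (v - u)
  simp only [star_trivial, mulVec_sub, sub_dotProduct, dotProduct_sub, hsymm, hAu] at hnonneg
  rw [dotProduct_comm u w] at hnonneg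
  linarith

lemma PosDef.sum_inv_submatrix_le {A : Matrix n n ℝ} (hA : A.PosDef) {e : m → n}
    (he : Function.Injective e) :
    ∑ i, ∑ j, (A.submatrix e e)⁻¹ i j ≤ ∑ i, ∑ j, A⁻¹ i j := by
  set S := A.submatrix e e
  set c := S⁻¹ *ᵥ 1
  have hSc : S *ᵥ c = 1 := by
    rw [mulVec_mulVec, mul_nonsing_inv _ (hA.submatrix he).det_pos.ne'.isUnit, one_mulVec]
  set v : n → ℝ := Function.extend e c 0
  have hv : ∀ w : n → ℝ, v ⬝ᵥ w = c ⬝ᵥ (w ∘ e) := fun w =>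
    (Fintype.sum_of_injective e he _ _
      (fun j hj => by simp [v, Function.extend_apply' _ _ _ hj])
      (fun i => by simp [v, he.extend_apply])).symm
  have hAv : (A *ᵥ v) ∘ e = 1 := by
    rw [← hSc]
    ext i
    simp only [Function.comp_apply, mulVec, dotProduct_comm (A (e i)), hv]
    exact dotProduct_comm _ _
  have key := hA.two_mul_dotProduct_sub_le v 1
  rw [hv, hv, hAv, show (1 : n → ℝ) ∘ e = 1 from rfl, ← sum_sum_eq_one_dotProduct_mulVec_one]
    at key
  rw [sum_sum_eq_one_dotProduct_mulVec_one S⁻¹, dotProduct_comm]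
  linarith

end Matrix

section Magnitude

variable {X : Type*} [MetricSpace X]

lemma finMag_nonneg (hpd : IsPosDefSpace X) (s : Finset X) : 0 ≤ finMag s := by
  classical
  exact (hpd s).sum_inv_nonneg

lemma finMag_mono (hpd : IsPosDefSpace X) {s t : Finset X} (hst : s ⊆ t) :
    finMag s ≤ finMag t := by
  classical
  exact (hpd t).sum_inv_submatrix_le (e := fun i : s => (⟨i, hst i.2⟩ : t))
    fun _ _ h => Subtype.ext (Subtype.mk.inj h)

lemma cMagE_mono {K K' : Set X} (h : K ⊆ K') : cMagE K ≤ cMagE K' :=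
  iSup₂_le fun s hs => le_iSup₂_of_le s (hs.trans h) le_rfl

lemma cMag_coe_finset (hpd : IsPosDefSpace X) (s : Finset X) :
    cMag (s : Set X) = finMag s := by
  have hE : cMagE (s : Set X) = ENNReal.ofReal (finMag s) :=
    le_antisymm
      (iSup₂_le fun t ht => ENNReal.ofReal_le_ofReal (finMag_mono hpd (Finset.coe_subset.1 ht)))
      (le_iSup₂_of_le s subset_rfl le_rfl)
  rw [cMag, hE, ENNReal.toReal_ofReal (finMag_nonneg hpd s)]

lemma finMag_le_cMag (hpd : IsPosDefSpace X) {K : Set X} (hK : cMagE K ≠ ⊤) {s : Finset X}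
    (hs : (s : Set X) ⊆ K) : finMag s ≤ cMag K := by
  rw [← cMag_coe_finset hpd s]
  exact ENNReal.toReal_mono hK (cMagE_mono hs)

lemma cMag_le_of_forall_finMag_le {K : Set X} {c : ℝ} (hc : 0 ≤ c)
    (h : ∀ s : Finset X, (s : Set X) ⊆ K → finMag s ≤ c) : cMag K ≤ c :=
  ENNReal.toReal_le_of_le_ofReal hc <| iSup₂_le fun s hs => ENNReal.ofReal_le_ofReal (h s hs)

lemma Tractable.cMagE_ne_top (hM : Tractable X) {K : Set X} (hK : IsBounded K) :
    cMagE K ≠ ⊤ := by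
  rcases K.eq_empty_or_nonempty with rfl | ⟨x, -⟩
  · simp [cMagE, finMag]
  · obtain ⟨r, hr⟩ := hK.subset_closedBall x
    exact ((cMagE_mono hr).trans_lt (hM.2.2 x r)).ne

end Magnitude

lemma exists_finset_subset_hausdorffDist_lt {X : Type*} [MetricSpace X] {s : Finset X}
    (hs : s.Nonempty) {t : Set X} {r : ℝ} (h : ∀ x ∈ s, ∃ y ∈ t, dist x y < r) :
    ∃ s' : Finset X, s'.Nonempty ∧ (s' : Set X) ⊆ t ∧ hausdorffDist (s : Set X) s' < r := by
  classical
  choose! f hft hf using h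
  set ρ := s.sup' hs fun x => dist x (f x)
  have hρ : ∀ x ∈ s, dist x (f x) ≤ ρ := fun x hx => s.le_sup' (fun x => dist x (f x)) hx
  refine ⟨s.image f, hs.image f, by simpa [Set.subset_def] using hft, ?_⟩
  refine lt_of_le_of_lt (hausdorffDist_le_of_mem_dist (dist_nonneg.trans (hρ _ hs.choose_spec))
    (fun x hx => ⟨f x, by simpa using ⟨x, hx, rfl⟩, hρ x hx⟩) ?_) ((s.sup'_lt_iff hs).2 hf)
  simp only [Finset.coe_image, Set.forall_mem_image]
  exact fun x hx => ⟨x, hx, dist_comm x (f x) ▸ hρ x hx⟩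

lemma cMag_le_cMag_add_of_dist_lt {X : Type*} [MetricSpace X] (hpd : IsPosDefSpace X)
    {K K' : NonemptyCompacts X} (hK' : cMagE (K' : Set X) ≠ ⊤) {r η : ℝ} (hη : 0 ≤ η)
    (hKK' : dist K K' < r)
    (hfin : ∀ F F' : {L : NonemptyCompacts X // (L : Set X).Finite}, dist F F' < r →
      cMag ((F : NonemptyCompacts X) : Set X) ≤ cMag ((F' : NonemptyCompacts X) : Set X) + η) :
    cMag (K : Set X) ≤ cMag (K' : Set X) + η := by
  have hK'η : 0 ≤ cMag (K' : Set X) + η := add_nonneg ENNReal.toReal_nonneg hη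
  refine cMag_le_of_forall_finMag_le hK'η fun s hsK => ?_
  rcases s.eq_empty_or_nonempty with rfl | hs
  · simpa [finMag] using hK'η
  have hHK : hausdorffEDist (K : Set X) K' ≠ ⊤ := hausdorffEDist_ne_top_of_nonempty_of_bounded
    K.nonempty K'.nonempty K.isCompact.isBounded K'.isCompact.isBounded
  have hKK'H : hausdorffDist (K : Set X) K' < r := by rwa [NonemptyCompacts.dist_eq] at hKK'
  obtain ⟨s', hs', hs'K', hss'⟩ := exists_finset_subset_hausdorffDist_lt hs fun x hx =>
    exists_dist_lt_of_hausdorffDist_lt (hsK hx) hKK'H hHK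
  have hmag : cMag (s : Set X) ≤ cMag (s' : Set X) + η :=
    hfin ⟨⟨⟨s, s.finite_toSet.isCompact⟩, hs⟩, s.finite_toSet⟩
      ⟨⟨⟨s', s'.finite_toSet.isCompact⟩, hs'⟩, s'.finite_toSet⟩
      (by rwa [Subtype.dist_eq, NonemptyCompacts.dist_eq])
  rw [cMag_coe_finset hpd, cMag_coe_finset hpd] at hmag
  linarith [finMag_le_cMag hpd hK' hs'K']

/-- For a tractable metric space `M`, the magnitude map on nonempty compact
subsets is uniformly continuous iff the magnitude map on nonempty finite subsets is. -/
theorem stmt_11 {M : Type*} [MetricSpace M] (hM : Tractable M) :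
    UniformContinuous (fun K : NonemptyCompacts M => cMag (K : Set M)) ↔
      UniformContinuous (fun F : {K : NonemptyCompacts M // (K : Set M).Finite} =>
        cMag ((F : NonemptyCompacts M) : Set M)) := by
  refine ⟨fun h => h.comp uniformContinuous_subtype_val, fun h => ?_⟩
  rw [Metric.uniformContinuous_iff] at h ⊢
  intro ε hε
  obtain ⟨δ, hδ, hunif⟩ := h (ε / 2) (half_pos hε)
  have hfin' : ∀ F F' : {K : NonemptyCompacts M // (K : Set M).Finite}, dist F F' < δ →
      cMag ((F : NonemptyCompacts M) : Set M) ≤ cMag ((F' : NonemptyCompacts M) : Set M) + ε / 2 :=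
    fun F F' hFF' => by linarith [(abs_sub_lt_iff.1 (Real.dist_eq _ _ ▸ hunif hFF')).1]
  have hmag (K K' : NonemptyCompacts M) (hKK' : dist K K' < δ) :
      cMag (K : Set M) ≤ cMag (K' : Set M) + ε / 2 :=
    cMag_le_cMag_add_of_dist_lt hM.1 (hM.cMagE_ne_top K'.isCompact.isBounded) (half_pos hε).le
      hKK' hfin'
  refine ⟨δ, hδ, fun {K K'} hKK' => ?_⟩
  rw [Real.dist_eq, abs_sub_lt_iff]
  constructor <;> linarith [hmag K K' hKK', hmag K' K (dist_comm K K' ▸ hKK')]
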